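/- The linear functional F = e₁* on the 4-dimensional Lie algebra Φ' (with basis e₁,e₂,e₃,e₄ and brackets [e₁,e₄]=[e₂,e₃]=-e₁, [e₂,e₄]=-(1/2)e₂, [e₃,e₄]=-(1/2)e₃) is a Frobenius functional: the map x ↦ F([x,-]) from Φ' to its dual is a linear isomorphism. -/
import Mathlib


noncomputable section

/-- The bracket of the 4-dimensional Frobenius Lie algebra Φ′ on `Fin 4 → K`,
with basis `e₁,…,e₄` (indexed `0,…,3`) and nonzero brackets
`[e₁,e₄]=[e₂,e₃]=-e₁`, `[e₂,e₄]=-(1/2)e₂`, `[e₃,e₄]=-(1/2)e₃`. -/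
def brPhi' {K : Type*} [Field K] (x y : Fin 4 → K) : Fin 4 → K :=
  ![ -(x 0 * y 3 - x 3 * y 0) - (x 1 * y 2 - x 2 * y 1),
     -(1/2) * (x 1 * y 3 - x 3 * y 1),
     -(1/2) * (x 2 * y 3 - x 3 * y 2),
     0 ]

/-- The map `x ↦ e₁*[x, -]` as a linear map into the dual. -/
def fwdPhi' {K : Type*} [Field K] : (Fin 4 → K) →ₗ[K] Module.Dual K (Fin 4 → K) where
  toFun x :=
  { toFun := fun y => brPhi' x y 0
    map_add' := by intro a b; simp [brPhi']; ring
    map_smul' := by intro c a; simp [brPhi']; ring }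
  map_add' := by intro a b; ext y; simp [brPhi']; ring
  map_smul' := by intro c a; ext y; simp [brPhi']; ring

/-- Explicit inverse of `fwdPhi'`. -/
def bwdPhi' {K : Type*} [Field K] : Module.Dual K (Fin 4 → K) →ₗ[K] (Fin 4 → K) where
  toFun φ := ![-(φ (Pi.single 3 1)), -(φ (Pi.single 2 1)), φ (Pi.single 1 1), φ (Pi.single 0 1)]
  map_add' := by intro a b; funext i; fin_cases i <;> simp <;> ring
  map_smul' := by intro c a; funext i; fin_cases i <;> simp <;> ring

/-- The functional `F = e₁*` is a Frobenius functional on Φ′ : the map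
`x ↦ F [x, -]` is a linear isomorphism from Φ′ to its dual. -/
theorem phi'_e1star_is_frobenius {K : Type*} [Field K] (h2 : (2 : K) ≠ 0) :
    ∃ η : (Fin 4 → K) ≃ₗ[K] Module.Dual K (Fin 4 → K),
      ∀ x y : Fin 4 → K, η x y = brPhi' x y 0 := by
  refine ⟨LinearEquiv.ofLinear fwdPhi' bwdPhi' ?_ ?_, fun x y => rfl⟩
  · ext φ y
    fin_cases y <;> simp [fwdPhi', bwdPhi', brPhi', Pi.single_apply] <;> ring
  · ext x i
    fin_cases i <;> simp [fwdPhi', bwdPhi', brPhi', Pi.single_apply] <;> ring
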